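/- There exists a constant C > 0 such that for all y > 0 and ε > 0, one has 0 ≤ K₀(y) − K₀(√(y² + ε)) ≤ C · log(1 + ε/y²). -/

import Mathlib

/-! Differentiating under the integral sign gives `K₀' = -K₁` with
`K₁(x) = ∫₀^∞ cosh t e^{-x cosh t} dt`, and since `sinh ≤ cosh`, `K₁(x)` is at most
`∫₀^∞ cosh t e^{-x sinh t} dt = 1/x`. Hence `K₀ + log` is nondecreasing on `(0, ∞)`, so
`K₀(y) - K₀(√(y² + ε)) ≤ log √(y² + ε) - log y = ½ log(1 + ε/y²)`. -/

open MeasureTheory Filter Set Topology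

/-- Macdonald function `K₀`, via its integral representation. -/
noncomputable def K0 (x : ℝ) : ℝ := ∫ t in Set.Ioi (0 : ℝ), Real.exp (-x * Real.cosh t)

open Real

noncomputable def K1 (x : ℝ) : ℝ := ∫ t in Ioi (0 : ℝ), cosh t * exp (-x * cosh t)

lemma tendsto_sinh_atTop : Tendsto sinh atTop atTop :=
  tendsto_atTop_mono' atTop ((eventually_ge_atTop 0).mono fun _ ↦ self_le_sinh_iff.2) tendsto_id

lemma hasDerivAt_exp_neg_mul_sinh {x : ℝ} (hx : x ≠ 0) (t : ℝ) :
    HasDerivAt (fun t ↦ -x⁻¹ * exp (-x * sinh t)) (cosh t * exp (-x * sinh t)) t := by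
  refine ((((hasDerivAt_sinh t).const_mul (-x)).exp).const_mul (-x⁻¹)).congr_deriv ?_
  field_simp

lemma tendsto_exp_neg_mul_sinh {x : ℝ} (hx : 0 < x) :
    Tendsto (fun t ↦ -x⁻¹ * exp (-x * sinh t)) atTop (𝓝 0) := by
  simpa using ((tendsto_exp_atBot.comp
    (tendsto_sinh_atTop.const_mul_atTop_of_neg (neg_neg_of_pos hx))).const_mul (-x⁻¹))

lemma integrableOn_cosh_mul_exp_neg_mul_sinh {x : ℝ} (hx : 0 < x) :
    IntegrableOn (fun t ↦ cosh t * exp (-x * sinh t)) (Ioi 0) :=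
  integrableOn_Ioi_deriv_of_nonneg' (fun t _ ↦ hasDerivAt_exp_neg_mul_sinh hx.ne' t)
    (fun t _ ↦ by positivity) (tendsto_exp_neg_mul_sinh hx)

lemma integral_cosh_mul_exp_neg_mul_sinh {x : ℝ} (hx : 0 < x) :
    ∫ t in Ioi (0 : ℝ), cosh t * exp (-x * sinh t) = x⁻¹ := by
  rw [integral_Ioi_of_hasDerivAt_of_nonneg' (fun t _ ↦ hasDerivAt_exp_neg_mul_sinh hx.ne' t)
    (fun t _ ↦ by positivity) (tendsto_exp_neg_mul_sinh hx)]
  simp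

lemma cosh_mul_exp_neg_mul_cosh_le {x : ℝ} (hx : 0 ≤ x) (t : ℝ) :
    cosh t * exp (-x * cosh t) ≤ cosh t * exp (-x * sinh t) := by
  gcongr _ * exp ?_
  nlinarith [sinh_lt_cosh t]

lemma integrableOn_cosh_mul_exp_neg_mul_cosh {x : ℝ} (hx : 0 < x) :
    IntegrableOn (fun t ↦ cosh t * exp (-x * cosh t)) (Ioi 0) :=
  (integrableOn_cosh_mul_exp_neg_mul_sinh hx).mono'
    (by fun_prop) (ae_of_all _ fun t ↦ by
      rw [norm_of_nonneg (by positivity)]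
      exact cosh_mul_exp_neg_mul_cosh_le hx.le t)

lemma integrableOn_exp_neg_mul_cosh {x : ℝ} (hx : 0 < x) :
    IntegrableOn (fun t ↦ exp (-x * cosh t)) (Ioi 0) :=
  (integrableOn_cosh_mul_exp_neg_mul_cosh hx).mono'
    (by fun_prop) (ae_of_all _ fun t ↦ by
      rw [norm_of_nonneg (by positivity)]
      exact le_mul_of_one_le_left (by positivity) (one_le_cosh t))

lemma K1_le_inv {x : ℝ} (hx : 0 < x) : K1 x ≤ x⁻¹ := by
  rw [← integral_cosh_mul_exp_neg_mul_sinh hx]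
  exact setIntegral_mono (integrableOn_cosh_mul_exp_neg_mul_cosh hx)
    (integrableOn_cosh_mul_exp_neg_mul_sinh hx) (cosh_mul_exp_neg_mul_cosh_le hx.le)

lemma hasDerivAt_K0 {x : ℝ} (hx : 0 < x) : HasDerivAt K0 (-K1 x) x := by
  rw [K1, ← integral_neg]
  -- on the ball of radius x/2 about x, the derivative in x is dominated by the K₁ integrand at x/2
  refine (hasDerivAt_integral_of_dominated_loc_of_deriv_le
    (F := fun x t ↦ exp (-x * cosh t)) (F' := fun x t ↦ -(cosh t * exp (-x * cosh t)))
    (Metric.ball_mem_nhds x (half_pos hx))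
    (Eventually.of_forall fun _ ↦ by fun_prop) (integrableOn_exp_neg_mul_cosh hx) (by fun_prop)
    (ae_of_all _ fun t z hz ↦ ?_) (integrableOn_cosh_mul_exp_neg_mul_cosh (half_pos hx))
    (ae_of_all _ fun t z _ ↦ ?_)).2
  · rw [Metric.mem_ball, Real.dist_eq, abs_lt] at hz
    rw [norm_neg, norm_of_nonneg (by positivity)]
    gcongr
    linarith
  · refine ((hasDerivAt_neg z).mul_const (cosh t)).exp.congr_deriv ?_
    ring

lemma antitoneOn_K0 : AntitoneOn K0 (Ioi 0) := fun a ha b hb hab ↦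
  setIntegral_mono (integrableOn_exp_neg_mul_cosh hb) (integrableOn_exp_neg_mul_cosh ha)
    fun t ↦ by gcongr

lemma monotoneOn_K0_add_log : MonotoneOn (fun x ↦ K0 x + log x) (Ioi 0) := by
  have hderiv : ∀ x ∈ Ioi (0 : ℝ), HasDerivAt (fun x ↦ K0 x + log x) (-K1 x + x⁻¹) x :=
    fun x hx ↦ (hasDerivAt_K0 hx).add (hasDerivAt_log (ne_of_gt hx))
  refine monotoneOn_of_hasDerivWithinAt_nonneg (convex_Ioi 0)
    (fun x hx ↦ (hderiv x hx).continuousAt.continuousWithinAt)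
    (fun x hx ↦ (hderiv x (interior_subset hx)).hasDerivWithinAt) fun x hx ↦ ?_
  rw [interior_Ioi] at hx
  linarith [K1_le_inv hx]

/-- Modulus-of-continuity bound for `K₀` from the proof of Lemma 5.8:
there is `C > 0` with `0 ≤ K₀(y) − K₀(√(y² + ε)) ≤ C log(1 + ε/y²)` for all
`y > 0` and `ε > 0`. -/
theorem K0_modulus_of_continuity :
    ∃ C : ℝ, 0 < C ∧ ∀ y : ℝ, 0 < y → ∀ ε : ℝ, 0 < ε →
      0 ≤ K0 y - K0 (Real.sqrt (y ^ 2 + ε)) ∧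
      K0 y - K0 (Real.sqrt (y ^ 2 + ε)) ≤ C * Real.log (1 + ε / y ^ 2) := by
  refine ⟨1 / 2, one_half_pos, fun y hy ε hε ↦ ?_⟩
  have hy_le : y ≤ √(y ^ 2 + ε) := (le_sqrt' hy).2 (by linarith)
  have hsqrt_pos : 0 < √(y ^ 2 + ε) := hy.trans_le hy_le
  have hy2 : y ^ 2 ≠ 0 := (pow_pos hy 2).ne'
  have hlog : log √(y ^ 2 + ε) - log y = 1 / 2 * log (1 + ε / y ^ 2) := by
    rw [log_sqrt (by positivity), one_add_div hy2, log_div (by positivity) hy2, log_pow]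
    push_cast
    ring
  constructor
  · exact sub_nonneg.2 (antitoneOn_K0 hy hsqrt_pos hy_le)
  · linarith [monotoneOn_K0_add_log hy hsqrt_pos hy_le]
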